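/- The event-study coefficient β̂_t is unbiased for τ_t if and only if the parallel trends condition holds: Cov₁(π_i, Y_{it}(0) − Y_{i0}(0)) = 0, which is equivalent to E[(1/N₁)Σ_i D_i(Y_{it}(0)−Y_{i0}(0))] = E[(1/N₀)Σ_i (1−D_i)(Y_{it}(0)−Y_{i0}(0))]. -/

import Mathlib

open MeasureTheory Finset

/-!
Unit `i` enters the treated group with probability `π i`, so taking expectations replaces `D i`
by `π i` in every expression that is affine in the assignment. Since assignment is binary, the
period-`t` difference in means only sees `Y1t` on treated and `Y0t` on control units, and without
anticipation the baseline difference in means only sees `Y00`. Hence `E β̂_t = τ_t + G` where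
`G = E[(1/N₁) Σ D Δ] - E[(1/N₀) Σ (1 - D) Δ]` is the gap between the expected untreated trends
`Δ = Y0t - Y00` of treated and control units. Because `Σ π = N₁`, centring either factor of the
covariance changes nothing, and `G = N² / (N₁ N₀) · Cov₁(π, Δ)`.
-/

section DifferenceInMeans

variable {ι : Type*} [Fintype ι]

noncomputable def sdim (N1 N0 : ℕ) (D Y1 Y0 : ι → ℝ) : ℝ :=
  (1 / (N1 : ℝ)) * ∑ i, D i * (D i * Y1 i + (1 - D i) * Y0 i)
    - (1 / (N0 : ℝ)) * ∑ i, (1 - D i) * (D i * Y1 i + (1 - D i) * Y0 i)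

variable {N1 N0 : ℕ} {D : ι → ℝ}

theorem sdim_of_binary (hD : ∀ i, D i = 0 ∨ D i = 1) (Y1 Y0 : ι → ℝ) :
    sdim N1 N0 D Y1 Y0
      = (1 / (N1 : ℝ)) * ∑ i, D i * Y1 i - (1 / (N0 : ℝ)) * ∑ i, (1 - D i) * Y0 i := by
  unfold sdim
  congr 2 <;> refine sum_congr rfl fun i _ => ?_ <;> rcases hD i with h | h <;> simp [h]

theorem sdim_sub_sdim_baseline_of_binary (hD : ∀ i, D i = 0 ∨ D i = 1) (Y1t Y0t Y0 : ι → ℝ) :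
    sdim N1 N0 D Y1t Y0t - sdim N1 N0 D Y0 Y0
      = (1 / (N1 : ℝ)) * ∑ i, D i * (Y1t i - Y0t i)
        + ((1 / (N1 : ℝ)) * ∑ i, D i * (Y0t i - Y0 i)
          - (1 / (N0 : ℝ)) * ∑ i, (1 - D i) * (Y0t i - Y0 i)) := by
  simp only [sdim_of_binary hD, mul_sub, sum_sub_distrib]
  ring

end DifferenceInMeans

theorem Finset.sum_mul_sub_const_of_sum_eq_zero {ι R : Type*} [NonUnitalNonAssocRing R]
    {s : Finset ι} {a : ι → R} (ha : ∑ i ∈ s, a i = 0) (b : ι → R) (c : R) :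
    ∑ i ∈ s, a i * (b i - c) = ∑ i ∈ s, a i * b i := by
  simp only [mul_sub, sum_sub_distrib, ← sum_mul, ha, zero_mul, sub_zero]

theorem trend_gap_eq_mul_cov {N N1 N0 : ℕ} (hN1 : 0 < N1) (hN0 : 0 < N0) (hN : N1 + N0 = N)
    {π Δ : Fin N → ℝ} (hπ : ∑ i, π i = N1) :
    (1 / (N1 : ℝ)) * ∑ i, π i * Δ i - (1 / (N0 : ℝ)) * ∑ i, (1 - π i) * Δ i
      = ((N : ℝ) ^ 2 / (N1 * N0))
        * ((1 / (N : ℝ)) * ∑ i, (π i - N1 / N) * (Δ i - (1 / (N : ℝ)) * ∑ j, Δ j)) := by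
  subst hN
  have hcentred : ∑ i, (π i - N1 / (N1 + N0 : ℕ)) = (0 : ℝ) := by
    simp only [sum_sub_distrib, hπ, sum_const, card_univ, Fintype.card_fin, nsmul_eq_mul]
    field_simp
    ring
  rw [sum_mul_sub_const_of_sum_eq_zero hcentred]
  simp only [sub_mul, one_mul, sum_sub_distrib, ← mul_sum]
  push_cast
  field_simp
  ring

section Expectation

variable {ι Ω : Type*} [Fintype ι] [MeasurableSpace Ω] {μ : Measure Ω} {D : ι → Ω → ℝ}

theorem integral_sum_mul_const (hD : ∀ i, Integrable (D i) μ) (f : ι → ℝ) :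
    ∫ ω, ∑ i, D i ω * f i ∂μ = ∑ i, (∫ ω, D i ω ∂μ) * f i := by
  rw [integral_finsetSum _ fun i _ => (hD i).mul_const _]
  simp only [integral_mul_const]

theorem integrable_sum_mul_const (hD : ∀ i, Integrable (D i) μ) (f : ι → ℝ) :
    Integrable (fun ω => ∑ i, D i ω * f i) μ :=
  integrable_finsetSum _ fun i _ => (hD i).mul_const _

theorem integrable_sum_one_sub_mul_const [IsFiniteMeasure μ] (hD : ∀ i, Integrable (D i) μ)
    (f : ι → ℝ) : Integrable (fun ω => ∑ i, (1 - D i ω) * f i) μ :=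
  integrable_finsetSum _ fun i _ => ((integrable_const 1).sub (hD i)).mul_const _

variable [IsProbabilityMeasure μ]

theorem integral_sum_one_sub_mul_const (hD : ∀ i, Integrable (D i) μ) (f : ι → ℝ) :
    ∫ ω, ∑ i, (1 - D i ω) * f i ∂μ = ∑ i, (1 - ∫ ω, D i ω ∂μ) * f i := by
  rw [integral_finsetSum (f := fun i ω => (1 - D i ω) * f i) _
    fun i _ => ((integrable_const 1).sub (hD i)).mul_const _]
  simp only [integral_mul_const, integral_sub (integrable_const 1) (hD _), integral_const,
    probReal_univ, smul_eq_mul, mul_one]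

theorem sum_integral_eq_of_ae_sum_eq (hD : ∀ i, Integrable (D i) μ) {c : ℝ}
    (hsum : ∀ᵐ ω ∂μ, ∑ i, D i ω = c) :
    ∑ i, ∫ ω, D i ω ∂μ = c := by
  rw [← integral_finsetSum _ fun i _ => hD i, integral_congr_ae hsum, integral_const]
  simp

theorem integral_sdim_sub_sdim_baseline {N1 N0 : ℕ} (hD01 : ∀ i ω, D i ω = 0 ∨ D i ω = 1)
    (hD : ∀ i, Integrable (D i) μ) (Y1t Y0t Y0 : ι → ℝ) :
    ∫ ω, sdim N1 N0 (fun i => D i ω) Y1t Y0t - sdim N1 N0 (fun i => D i ω) Y0 Y0 ∂μ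
      = ∫ ω, (1 / (N1 : ℝ)) * ∑ i, D i ω * (Y1t i - Y0t i) ∂μ
        + ((∫ ω, (1 / (N1 : ℝ)) * ∑ i, D i ω * (Y0t i - Y0 i) ∂μ)
          - ∫ ω, (1 / (N0 : ℝ)) * ∑ i, (1 - D i ω) * (Y0t i - Y0 i) ∂μ) := by
  have hA := (integrable_sum_mul_const hD (fun i => Y1t i - Y0t i)).const_mul (1 / (N1 : ℝ))
  have hT := (integrable_sum_mul_const hD (fun i => Y0t i - Y0 i)).const_mul (1 / (N1 : ℝ))
  have hC := (integrable_sum_one_sub_mul_const hD (fun i => Y0t i - Y0 i)).const_mul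
    (1 / (N0 : ℝ))
  simp_rw [sdim_sub_sdim_baseline_of_binary (hD01 · _)]
  rw [integral_add hA, integral_sub hT hC]
  exact hT.sub hC

end Expectation

/-- The event-study coefficient is unbiased for τ_t iff parallel trends
(zero covariance between π and untreated trends) holds, which is in turn equivalent to
equality of the expected trends among treated and control units. -/
theorem did_unbiased_iff_parallel_trends {Ω : Type*} [MeasurableSpace Ω] (μ : Measure Ω)
    [IsProbabilityMeasure μ]
    (N N1 N0 : ℕ) (hN1 : 0 < N1) (hN0 : 0 < N0) (hN : N1 + N0 = N)
    (Y0t Y1t Y00 Y10 π : Fin N → ℝ) (D : Fin N → Ω → ℝ)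
    (hD01 : ∀ i ω, D i ω = 0 ∨ D i ω = 1)
    (hint : ∀ i, Integrable (D i) μ)
    (hE : ∀ i, ∫ ω, D i ω ∂μ = π i)
    (hsum : ∀ᵐ ω ∂μ, ∑ i, D i ω = (N1 : ℝ))
    (hnoanticip : ∀ i, Y10 i = Y00 i) :
    ((∫ ω, (((1 / (N1 : ℝ)) * ∑ i, D i ω * (D i ω * Y1t i + (1 - D i ω) * Y0t i)
          - (1 / (N0 : ℝ)) * ∑ i, (1 - D i ω) * (D i ω * Y1t i + (1 - D i ω) * Y0t i))
        - ((1 / (N1 : ℝ)) * ∑ i, D i ω * (D i ω * Y10 i + (1 - D i ω) * Y00 i)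
          - (1 / (N0 : ℝ)) * ∑ i, (1 - D i ω) * (D i ω * Y10 i + (1 - D i ω) * Y00 i))) ∂μ)
        = (1 / (N1 : ℝ)) * ∑ i, π i * (Y1t i - Y0t i)
      ↔ (1 / (N : ℝ)) * ∑ i, (π i - (N1 : ℝ) / (N : ℝ))
          * ((Y0t i - Y00 i) - (1 / (N : ℝ)) * ∑ j, (Y0t j - Y00 j)) = 0)
    ∧ ((1 / (N : ℝ)) * ∑ i, (π i - (N1 : ℝ) / (N : ℝ))
          * ((Y0t i - Y00 i) - (1 / (N : ℝ)) * ∑ j, (Y0t j - Y00 j)) = 0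
      ↔ (∫ ω, (1 / (N1 : ℝ)) * ∑ i, D i ω * (Y0t i - Y00 i) ∂μ)
          = (∫ ω, (1 / (N0 : ℝ)) * ∑ i, (1 - D i ω) * (Y0t i - Y00 i) ∂μ)) := by
  change ((∫ ω, sdim N1 N0 (fun i => D i ω) Y1t Y0t - sdim N1 N0 (fun i => D i ω) Y10 Y00 ∂μ)
    = _ ↔ _) ∧ _
  rw [funext hnoanticip, integral_sdim_sub_sdim_baseline hD01 hint]
  simp only [integral_const_mul, integral_sum_mul_const hint, integral_sum_one_sub_mul_const hint,
    hE]
  have hπ : ∑ i, π i = N1 := by simpa only [hE] using sum_integral_eq_of_ae_sum_eq hint hsum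
  have hscale : (N : ℝ) ^ 2 / (N1 * N0) ≠ 0 := by
    have : 0 < N := by omega
    positivity
  rw [add_eq_left, ← sub_eq_zero (a := (1 / (N1 : ℝ)) * _), trend_gap_eq_mul_cov hN1 hN0 hN hπ,
    mul_eq_zero, or_iff_right hscale]
  exact ⟨.rfl, .rfl⟩
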